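/- Let X, Y be Banach spaces, let U be an open subset of a Banach space Z, and let Λ̃ : U × X → Y be a real analytic map which is linear and continuous in the second variable. Then the map from U to the space L(X,Y) of bounded linear operators taking z to Λ̃(z,·) equals the partial Fréchet differential d_x Λ̃(z,x) (for any x), and is real analytic from U to L(X,Y). -/

import Mathlib

/-!
Since `F z` is linear, it is the partial derivative in `x` of `G (z, x) = F z x` at any point,
i.e. `F z = fderiv G (z, x₀) ∘L inr`. The derivative of an analytic map is analytic, so `F` is
near `z` a continuous linear image of the analytic map `z ↦ fderiv G (z, x₀)`.
-/

open Filter Topology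
open ContinuousLinearMap (compL inr)

section

variable {𝕜 X Y Z : Type*} [NontriviallyNormedField 𝕜]
  [NormedAddCommGroup X] [NormedSpace 𝕜 X] [NormedAddCommGroup Y] [NormedSpace 𝕜 Y]
  [NormedAddCommGroup Z] [NormedSpace 𝕜 Z]

theorem HasFDerivAt.comp_inr_eq_of_clm_apply {F : Z → X →L[𝕜] Y} {G : Z × X →L[𝕜] Y}
    {z : Z} {x : X} (h : HasFDerivAt (fun q : Z × X => F q.1 q.2) G (z, x)) :
    G.comp (inr 𝕜 Z X) = F z := by
  have hslice := h.comp x (hasFDerivAt_prodMk_right z x)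
  exact hslice.unique (F z).hasFDerivAt

theorem AnalyticAt.curry_clm [CompleteSpace Y] {F : Z → X →L[𝕜] Y} {z : Z} {x : X}
    (h : AnalyticAt 𝕜 (fun q : Z × X => F q.1 q.2) (z, x)) : AnalyticAt 𝕜 F z := by
  set G : Z × X → Y := fun q => F q.1 q.2
  have hslice : Tendsto (fun z' : Z => (z', x)) (𝓝 z) (𝓝 (z, x)) :=
    (continuous_id.prodMk continuous_const).tendsto z
  have hslice_analytic : AnalyticAt 𝕜 (fun z' : Z => (z', x)) z :=
    analyticAt_id.prod analyticAt_const
  have hpartial : AnalyticAt 𝕜 (fun z' => (fderiv 𝕜 G (z', x)).comp (inr 𝕜 Z X)) z :=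
    ((compL 𝕜 X (Z × X) Y).flip (inr 𝕜 Z X)).analyticAt _ |>.comp <|
      h.fderiv.comp (f := fun z' => (z', x)) hslice_analytic
  refine hpartial.congr ?_
  filter_upwards [hslice.eventually h.eventually_analyticAt] with z' hz'
  exact hz'.differentiableAt.hasFDerivAt.comp_inr_eq_of_clm_apply

end

theorem analyticity_of_operator_valued_map_general
    {X Y Z : Type*} [NormedAddCommGroup X] [NormedSpace ℝ X]
    [NormedAddCommGroup Y] [NormedSpace ℝ Y] [CompleteSpace Y]
    [NormedAddCommGroup Z] [NormedSpace ℝ Z]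
    (U : Set Z) (hU : IsOpen U)
    (Λ : Z → X → Y) (F : Z → X →L[ℝ] Y)
    (hF : ∀ z x, F z x = Λ z x)
    (hA : AnalyticOn ℝ (fun p : Z × X => Λ p.1 p.2) (U ×ˢ (Set.univ : Set X))) :
    (∀ z ∈ U, ∀ x : X, F z = fderiv ℝ (fun x' => Λ z x') x) ∧
      AnalyticOn ℝ F U := by
  obtain rfl : Λ = fun z => ⇑(F z) := by
    funext z x
    exact (hF z x).symm
  refine ⟨fun z _ x => (F z).fderiv.symm, fun z hz => ?_⟩
  have hAz := (hU.prod isOpen_univ).analyticOn_iff_analyticOnNhd.mp hA (z, 0) ⟨hz, trivial⟩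
  exact hAz.curry_clm.analyticWithinAt

/-- If `Λ̃ : U × X → Y` is analytic and linear continuous in the second variable
(i.e. `Λ̃(z,·) = F z` for a family `F` of bounded linear operators), then the map
`z ↦ Λ̃(z,·) ∈ L(X,Y)` equals the partial Fréchet differential `d_x Λ̃(z,x)` for any `x`,
and is analytic from `U` to `L(X,Y)`. -/
theorem analyticity_of_operator_valued_map
    {X Y Z : Type*} [NormedAddCommGroup X] [NormedSpace ℝ X] [CompleteSpace X]
    [NormedAddCommGroup Y] [NormedSpace ℝ Y] [CompleteSpace Y]
    [NormedAddCommGroup Z] [NormedSpace ℝ Z] [CompleteSpace Z]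
    (U : Set Z) (hU : IsOpen U)
    (Λ : Z → X → Y) (F : Z → X →L[ℝ] Y)
    (hF : ∀ z x, F z x = Λ z x)
    (hA : AnalyticOn ℝ (fun p : Z × X => Λ p.1 p.2) (U ×ˢ (Set.univ : Set X))) :
    (∀ z ∈ U, ∀ x : X, F z = fderiv ℝ (fun x' => Λ z x') x) ∧
      AnalyticOn ℝ F U :=
  analyticity_of_operator_valued_map_general U hU Λ F hF hA
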